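/- For every x > 0, the family {U⁺(g) : g ∈ C(x)} of positive parts U⁺(g) := max(U(g), 0) is uniformly integrable in L¹(μ). -/

import Mathlib

/-!
Because `U' → 0` at infinity, `U⁺` grows sublinearly: for every `η > 0` there is `c` with
`U⁺(t) ≤ η t + c` on `[0, ∞)`. Integrating over a set `s` gives
`∫_s U⁺(g) dμ ≤ η ‖g‖₁ + c μ(s)`, and `‖g‖₁` is bounded uniformly on `C(x)` since `C` is bounded
in `L¹(μ)`. Choosing first `η` small and then `μ(s)` small yields uniform integrability.
-/

open MeasureTheory Filter Set Topology
open scoped ENNReal Pointwise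

noncomputable section

variable {Ω : Type*} [MeasurableSpace Ω]

/-- `L⁰₊(μ)`: the nonnegative (μ-a.e.) measurable functions on `Ω`,
to be thought of as identified up to μ-a.e. equality. -/
def L0plus (μ : Measure Ω) : Set (Ω → ℝ) :=
  {g | AEMeasurable g μ ∧ 0 ≤ᵐ[μ] g}

/-- The pairing `⟨g,h⟩ = ∫_Ω g·h dμ`, valued in `[0,∞]`. -/
def muPairing (μ : Measure Ω) (g h : Ω → ℝ) : ℝ≥0∞ :=
  ∫⁻ ω, ENNReal.ofReal (g ω * h ω) ∂μ

/-- The polar `A° = {h ∈ L⁰₊(μ) : ⟨g,h⟩ ≤ 1 for all g ∈ A}` of a set `A ⊆ L⁰₊(μ)`. -/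
def muPolar (μ : Measure Ω) (A : Set (Ω → ℝ)) : Set (Ω → ℝ) :=
  {h | h ∈ L0plus μ ∧ ∀ g ∈ A, muPairing μ g h ≤ 1}

/-- A subset of `L⁰₊(μ)` is solid if it contains every element of `L⁰₊(μ)`
dominated μ-a.e. by one of its members. -/
def SolidIn (μ : Measure Ω) (A : Set (Ω → ℝ)) : Prop :=
  ∀ f ∈ A, ∀ g ∈ L0plus μ, g ≤ᵐ[μ] f → g ∈ A

/-- A subset of `L⁰₊(μ)` is closed with respect to convergence in measure `μ`. -/
def ClosedInMeasure (μ : Measure Ω) (A : Set (Ω → ℝ)) : Prop :=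
  ∀ (f : ℕ → Ω → ℝ) (g : Ω → ℝ), (∀ n, f n ∈ A) → g ∈ L0plus μ →
    TendstoInMeasure μ f atTop g → g ∈ A

section

variable {μ : Measure Ω}

theorem exists_max_le_mul_add_of_tendsto_deriv_atTop_zero {U U' : ℝ → ℝ}
    (hU : MonotoneOn U (Ioi 0)) (hUderiv : ∀ x ∈ Ioi (0:ℝ), HasDerivAt U (U' x) x)
    (hU' : Tendsto U' atTop (𝓝 0)) {η : ℝ} (hη : 0 < η) :
    ∃ c : ℝ, ∀ t, 0 ≤ t → max (U t) 0 ≤ η * t + c := by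
  obtain ⟨y, hy⟩ := eventually_atTop.mp (hU'.eventually_lt_const hη)
  set y₀ := max y 1
  have hy₀ : 0 < y₀ := lt_max_of_lt_right one_pos
  have hlinear : ∀ t, 0 < t → U t ≤ η * t + U y₀ := by
    intro t ht
    rcases le_total t y₀ with hty | hty
    · linarith [hU ht hy₀ hty, mul_pos hη ht]
    · have hderiv : ∀ z ∈ interior (Ici y₀), HasDerivAt U (U' z) z := by
        rw [interior_Ici]
        exact fun z hz => hUderiv z (hy₀.trans hz)
      have hslope := (convex_Ici y₀).image_sub_le_mul_sub_of_deriv_le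
        (fun z hz => (hUderiv z (hy₀.trans_le hz)).continuousAt.continuousWithinAt)
        (fun z hz => (hderiv z hz).differentiableAt.differentiableWithinAt)
        (fun z hz => (hderiv z hz).deriv ▸ (hy z ((le_max_left y 1).trans (interior_subset hz))).le)
        y₀ self_mem_Ici t hty hty
      linarith [mul_pos hη hy₀]
  refine ⟨max (max (U y₀) (U 0)) 0, fun t ht => max_le ?_ (by positivity)⟩
  rcases ht.eq_or_lt with rfl | ht
  · simp
  · linarith [hlinear t ht, le_max_left (U y₀) (U 0), le_max_left (max (U y₀) (U 0)) 0]

theorem ContinuousOn.aestronglyMeasurable_comp_of_nonneg {F : ℝ → ℝ}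
    (hF : ContinuousOn F (Ioi 0)) {g : Ω → ℝ} (hg : AEMeasurable g μ) (hg0 : 0 ≤ᵐ[μ] g) :
    AEStronglyMeasurable (fun ω => F (g ω)) μ := by
  classical
  have hφ : Measurable ((Ioi 0).piecewise F fun _ => F 0) :=
    hF.measurable_piecewise continuousOn_const measurableSet_Ioi
  refine (hφ.comp_aemeasurable hg).aestronglyMeasurable.congr ?_
  filter_upwards [hg0] with ω hω
  rcases hω.eq_or_lt with h | h
  · simp [← h]
  · exact piecewise_eq_of_mem _ _ _ h

theorem setLIntegral_enorm_comp_le {F : ℝ → ℝ} {η c : ℝ} (hη : 0 ≤ η)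
    (hF : ∀ t, 0 ≤ t → ‖F t‖ ≤ η * t + c) {g : Ω → ℝ} (hg0 : 0 ≤ᵐ[μ] g) (s : Set Ω) :
    ∫⁻ ω in s, ‖F (g ω)‖ₑ ∂μ
      ≤ ENNReal.ofReal η * ∫⁻ ω, ENNReal.ofReal (g ω) ∂μ + ENNReal.ofReal c * μ s := by
  calc ∫⁻ ω in s, ‖F (g ω)‖ₑ ∂μ
      ≤ ∫⁻ ω in s, (ENNReal.ofReal η * ENNReal.ofReal (g ω) + ENNReal.ofReal c) ∂μ := by
        refine lintegral_mono_ae (ae_restrict_of_ae ?_)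
        filter_upwards [hg0] with ω hω
        rw [← ofReal_norm, ← ENNReal.ofReal_mul hη]
        exact (ENNReal.ofReal_le_ofReal (hF _ hω)).trans ENNReal.ofReal_add_le
    _ = ENNReal.ofReal η * ∫⁻ ω in s, ENNReal.ofReal (g ω) ∂μ + ENNReal.ofReal c * μ s := by
        rw [lintegral_add_right _ measurable_const,
          lintegral_const_mul' _ _ ENNReal.ofReal_ne_top, setLIntegral_const]
    _ ≤ _ := by
        gcongr
        exact Measure.restrict_le_self

theorem uniformIntegrable_of_setLIntegral_le [IsFiniteMeasure μ] {ι β : Type*}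
    [NormedAddCommGroup β] {f : ι → Ω → β} (hf : ∀ i, AEStronglyMeasurable (f i) μ)
    (h : ∀ ε : ℝ≥0∞, 0 < ε → ∃ c : ℝ≥0∞, c ≠ ⊤ ∧
      ∀ i s, MeasurableSet s → ∫⁻ ω in s, ‖f i ω‖ₑ ∂μ ≤ ε + c * μ s) :
    UniformIntegrable f 1 μ := by
  refine ⟨hf, fun ε hε => ?_, ?_⟩
  · have hε2 : 0 < ENNReal.ofReal ε / 2 := by simpa using hε
    obtain ⟨c, hc, hbound⟩ := h _ hε2
    obtain ⟨δ, hδ, hδc⟩ := ENNReal.exists_nnreal_pos_mul_lt hc hε2.ne'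
    refine ⟨δ, hδ, fun i s hs hμs => ?_⟩
    rw [eLpNorm_indicator_eq_eLpNorm_restrict hs, eLpNorm_one_eq_lintegral_enorm]
    calc ∫⁻ ω in s, ‖f i ω‖ₑ ∂μ ≤ ENNReal.ofReal ε / 2 + c * μ s := hbound i s hs
      _ ≤ ENNReal.ofReal ε / 2 + ENNReal.ofReal ε / 2 := by
          gcongr
          calc c * μ s ≤ δ * c := by
                rw [mul_comm]; gcongr; simpa using hμs
            _ ≤ _ := hδc.le
      _ = ENNReal.ofReal ε := ENNReal.add_halves _
  · obtain ⟨c, hc, hbound⟩ := h 1 one_pos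
    refine ⟨(1 + c * μ univ).toNNReal, fun i => ?_⟩
    rw [ENNReal.coe_toNNReal (by finiteness), eLpNorm_one_eq_lintegral_enorm,
      ← setLIntegral_univ]
    exact hbound i univ MeasurableSet.univ

theorem uniformIntegrable_comp_of_forall_le_mul_add [IsFiniteMeasure μ] {F : ℝ → ℝ}
    (hFc : ContinuousOn F (Ioi 0)) (hF : ∀ η > 0, ∃ c, ∀ t, 0 ≤ t → ‖F t‖ ≤ η * t + c)
    {A : Set (Ω → ℝ)} (hA : A ⊆ L0plus μ) {K : ℝ≥0∞} (hK : K ≠ ⊤)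
    (hAK : ∀ g ∈ A, ∫⁻ ω, ENNReal.ofReal (g ω) ∂μ ≤ K) :
    UniformIntegrable (fun (g : A) ω => F (g.1 ω)) 1 μ := by
  refine uniformIntegrable_of_setLIntegral_le
    (fun g => hFc.aestronglyMeasurable_comp_of_nonneg (hA g.2).1 (hA g.2).2) fun ε hε => ?_
  obtain ⟨η, hη, hηK⟩ := ENNReal.exists_nnreal_pos_mul_lt hK hε.ne'
  obtain ⟨c, hc⟩ := hF η hη
  refine ⟨ENNReal.ofReal c, ENNReal.ofReal_ne_top, fun g s _ => ?_⟩
  calc ∫⁻ ω in s, ‖F (g.1 ω)‖ₑ ∂μ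
      ≤ ENNReal.ofReal η * ∫⁻ ω, ENNReal.ofReal (g.1 ω) ∂μ + ENNReal.ofReal c * μ s :=
        setLIntegral_enorm_comp_le η.2 hc (hA g.2).2 s
    _ ≤ ε + ENNReal.ofReal c * μ s := by
        gcongr
        calc ENNReal.ofReal η * ∫⁻ ω, ENNReal.ofReal (g.1 ω) ∂μ ≤ η * K := by
              rw [ENNReal.ofReal_coe_nnreal]
              gcongr
              exact hAK _ g.2
          _ ≤ ε := hηK.le

theorem smul_mem_L0plus {c : ℝ} (hc : 0 ≤ c) {g : Ω → ℝ} (hg : g ∈ L0plus μ) :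
    c • g ∈ L0plus μ :=
  ⟨hg.1.const_smul c, by filter_upwards [hg.2] with ω hω using smul_nonneg hc hω⟩

theorem lintegral_ofReal_smul {c : ℝ} (hc : 0 ≤ c) (g : Ω → ℝ) :
    ∫⁻ ω, ENNReal.ofReal ((c • g) ω) ∂μ = ENNReal.ofReal c * ∫⁻ ω, ENNReal.ofReal (g ω) ∂μ := by
  simp_rw [Pi.smul_apply, smul_eq_mul, ENNReal.ofReal_mul hc]
  exact lintegral_const_mul' _ _ ENNReal.ofReal_ne_top

end

theorem unifIntegrable_Uplus_general (μ : Measure Ω) [IsFiniteMeasure μ]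
    (U U' : ℝ → ℝ)
    (hUmono : StrictMonoOn U (Ioi 0))
    (hUderiv : ∀ x ∈ Ioi (0:ℝ), HasDerivAt U (U' x) x)
    (hInadaInf : Tendsto U' atTop (𝓝 0))
    (C : Set (Ω → ℝ))
    (hCsub : C ⊆ L0plus μ)
    (hCbddL1 : ∃ K : ℝ≥0∞, K ≠ ⊤ ∧ ∀ g ∈ C, ∫⁻ ω, ENNReal.ofReal (g ω) ∂μ ≤ K)
    (x : ℝ) (hx : 0 < x) :
    UniformIntegrable (fun (g : ↥(x • C)) (ω : Ω) => max (U (g.1 ω)) 0) 1 μ := by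
  obtain ⟨K, hK, hCK⟩ := hCbddL1
  have hUcont : ContinuousOn U (Ioi 0) := fun t ht =>
    (hUderiv t ht).continuousAt.continuousWithinAt
  refine uniformIntegrable_comp_of_forall_le_mul_add (F := fun t => max (U t) 0)
    (hUcont.sup continuousOn_const) (fun η hη => ?_) (A := x • C) (K := ENNReal.ofReal x * K) ?_
    (ENNReal.mul_ne_top ENNReal.ofReal_ne_top hK) ?_
  · obtain ⟨c, hc⟩ :=
      exists_max_le_mul_add_of_tendsto_deriv_atTop_zero hUmono.monotoneOn hUderiv hInadaInf hη
    exact ⟨c, fun t ht => by rw [Real.norm_of_nonneg (le_max_right _ _)]; exact hc t ht⟩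
  · rintro _ ⟨g, hg, rfl⟩
    exact smul_mem_L0plus hx.le (hCsub hg)
  · rintro _ ⟨g, hg, rfl⟩
    rw [lintegral_ofReal_smul hx.le]
    gcongr
    exact hCK g hg

/-- **Uniform integrability of `(U⁺(g))_{g ∈ C(x)}`.** For every `x > 0`, the family
of positive parts `U⁺(g) = max (U g) 0`, `g ∈ C(x) = x•C`, is uniformly integrable. -/
theorem unifIntegrable_Uplus (μ : Measure Ω) [IsFiniteMeasure μ]
    (U U' : ℝ → ℝ)
    (hUconc : StrictConcaveOn ℝ (Ioi 0) U)
    (hUmono : StrictMonoOn U (Ioi 0))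
    (hUderiv : ∀ x ∈ Ioi (0:ℝ), HasDerivAt U (U' x) x)
    (hU'cont : ContinuousOn U' (Ioi 0))
    (hInada0 : Tendsto U' (𝓝[>] (0:ℝ)) atTop)
    (hInadaInf : Tendsto U' atTop (𝓝 0))
    (C D : Set (Ω → ℝ))
    (hCsub : C ⊆ L0plus μ) (hDsub : D ⊆ L0plus μ)
    (hCconv : Convex ℝ C) (hDconv : Convex ℝ D)
    (hCsolid : SolidIn μ C) (hDsolid : SolidIn μ D)
    (hCclosed : ClosedInMeasure μ C) (hDclosed : ClosedInMeasure μ D)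
    (hCpolar : C = muPolar μ D) (hDpolar : D = muPolar μ C)
    (hCbddL1 : ∃ K : ℝ≥0∞, K ≠ ⊤ ∧ ∀ g ∈ C, ∫⁻ ω, ENNReal.ofReal (g ω) ∂μ ≤ K)
    (hDbddL0 : ∀ ε : ℝ≥0∞, 0 < ε → ∃ M : ℝ, ∀ h ∈ D, μ {ω | M < h ω} ≤ ε)
    (x : ℝ) (hx : 0 < x) :
    UniformIntegrable (fun (g : ↥(x • C)) (ω : Ω) => max (U (g.1 ω)) 0) 1 μ :=
  unifIntegrable_Uplus_general μ U U' hUmono hUderiv hInadaInf C hCsub hCbddL1 x hx
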